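/- arXiv:1901.03382 — 6 statements merged into one kernel-verified Lean document; each statement's English description precedes it below -/
import Mathlib

section
/- For 0 < x < 1, the limit as s → 1⁻ (along real s < 1) of the series ∑_{n=1}^∞ sin(2nπx)/n^{1-s} equals (1/2)·cot(πx). -/
/-!
Write `y = πx`, `σ = 1 - s` and `vₙ = (n + 1)^(-σ)`. By the product-to-sum formulas,
`sin (2(n+1)y)` is `c (gₙ - gₙ₊₁)` with `gₙ = cos ((2n+1)y)` and `c = 1 / (2 sin y)`, and `gₙ₊₁`
is in turn `-c` times a difference of consecutive sines. Two summations by parts then give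
`|∑ vₙ sin (2(n+1)y) - cot y / 2| ≤ 2c² (v₀ - v₁) = 2c² (1 - 2^(-σ))`: the first uses that `v`
decreases to `0`, the second that its differences decrease, i.e. that `t ↦ t^(-σ)` is convex.
The bound tends to `0` as `s → 1⁻`.
-/

open Filter Real Topology Set

theorem sum_range_mul_sub_succ_eq (v g : ℕ → ℝ) (N : ℕ) :
    ∑ i ∈ Finset.range N, v i * (g i - g (i + 1)) =
      v 0 * g 0 - v N * g N - ∑ i ∈ Finset.range N, (v i - v (i + 1)) * g (i + 1) := by
  induction N with
  | zero => simp
  | succ N ih => rw [Finset.sum_range_succ, Finset.sum_range_succ, ih]; ring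

theorem abs_sum_range_mul_sub_succ_le {v g : ℕ → ℝ} (hv : Antitone v) (hv₀ : ∀ i, 0 ≤ v i)
    {M : ℝ} (hg : ∀ i, |g i| ≤ M) (N : ℕ) :
    |∑ i ∈ Finset.range N, v i * (g i - g (i + 1))| ≤ 2 * M * v 0 := by
  have hdiff : ∀ i, 0 ≤ v i - v (i + 1) := fun i => sub_nonneg.2 (hv i.le_succ)
  have hsum : |∑ i ∈ Finset.range N, (v i - v (i + 1)) * g (i + 1)| ≤ (v 0 - v N) * M :=
    calc |∑ i ∈ Finset.range N, (v i - v (i + 1)) * g (i + 1)|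
        ≤ ∑ i ∈ Finset.range N, (v i - v (i + 1)) * M := by
          refine (Finset.abs_sum_le_sum_abs _ _).trans (Finset.sum_le_sum fun i _ => ?_)
          rw [abs_mul, abs_of_nonneg (hdiff i)]
          exact mul_le_mul_of_nonneg_left (hg _) (hdiff i)
      _ = (v 0 - v N) * M := by rw [← Finset.sum_mul, Finset.sum_range_sub']
  have hfirst : |v 0 * g 0| ≤ v 0 * M := by
    rw [abs_mul, abs_of_nonneg (hv₀ 0)]; exact mul_le_mul_of_nonneg_left (hg 0) (hv₀ 0)
  have hlast : |v N * g N| ≤ v N * M := by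
    rw [abs_mul, abs_of_nonneg (hv₀ N)]; exact mul_le_mul_of_nonneg_left (hg N) (hv₀ N)
  rw [sum_range_mul_sub_succ_eq]
  linarith [abs_sub (v 0 * g 0 - v N * g N)
    (∑ i ∈ Finset.range N, (v i - v (i + 1)) * g (i + 1)), abs_sub (v 0 * g 0) (v N * g N)]

theorem convexOn_rpow_of_nonpos {p : ℝ} (hp : p ≤ 0) :
    ConvexOn ℝ (Ioi 0) fun x : ℝ => x ^ p := by
  have hlog : ConvexOn ℝ (Ioi 0) fun x => -p • -log x :=
    strictConcaveOn_log_Ioi.concaveOn.neg.smul (neg_nonneg.2 hp)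
  refine ((convexOn_exp.subset (subset_univ _) ?_).comp hlog (exp_monotone.monotoneOn _)).congr
    fun x hx => ?_
  · rw [convex_iff_isPreconnected]
    exact isPreconnected_Ioi.image _ fun x hx =>
      ((continuousAt_log (ne_of_gt hx)).neg.const_smul (-p) :).continuousWithinAt
  · simp [rpow_def_of_pos (mem_Ioi.1 hx), mul_comm]

theorem ConvexOn.antitone_sub_nat_succ {f : ℝ → ℝ} (hf : ConvexOn ℝ (Ioi 0) f) :
    Antitone fun n : ℕ => f (n + 1) - f (n + 2) := by
  refine antitone_nat_of_succ_le fun n => ?_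
  have := hf.slope_mono_adjacent (x := n + 1) (y := n + 2) (z := n + 3)
    (by simp; positivity) (by simp; positivity) (by linarith) (by linarith)
  push_cast
  ring_nf at this ⊢
  linarith

theorem two_mul_sin_mul_sin_mul (y t : ℝ) :
    2 * sin y * sin (t * y) = cos ((t - 1) * y) - cos ((t + 1) * y) := by
  rw [two_mul_sin_mul_sin, ← cos_neg]; ring_nf

theorem two_mul_sin_mul_cos_mul (y t : ℝ) :
    2 * sin y * cos (t * y) = sin ((t + 1) * y) - sin ((t - 1) * y) := by
  rw [two_mul_sin_mul_cos, ← neg_neg (sin (y - _)), ← sin_neg]; ring_nf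

theorem abs_sum_range_mul_sin_sub_le {v : ℕ → ℝ} (hv : Antitone v) (hv₀ : ∀ n, 0 ≤ v n)
    (hv' : Antitone fun n => v n - v (n + 1)) {y : ℝ} (hy : sin y ≠ 0) (N : ℕ) :
    |∑ n ∈ Finset.range N, v n * sin (2 * (n + 1) * y) - v 0 * cot y / 2|
      ≤ v N / (2 * |sin y|) + (v 0 - v 1) / (2 * sin y ^ 2) := by
  set c := 1 / (2 * sin y)
  set a : ℕ → ℝ := fun n => sin (2 * (n + 1) * y)
  set g : ℕ → ℝ := fun n => cos ((2 * n + 1) * y)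
  have ha : ∀ n, a n = c * (g n - g (n + 1)) := fun n => by
    have := two_mul_sin_mul_sin_mul y (2 * n + 2)
    simp only [a, g, c]; push_cast; field_simp; ring_nf at this ⊢; linarith
  have hg : ∀ n, g (n + 1) = -c * (a n - a (n + 1)) := fun n => by
    have := two_mul_sin_mul_cos_mul y (2 * n + 3)
    simp only [a, g, c]; push_cast; field_simp; ring_nf at this ⊢; linarith
  have hw₀ : ∀ n, 0 ≤ v n - v (n + 1) := fun n => sub_nonneg.2 (hv n.le_succ)
  have hsum : ∑ n ∈ Finset.range N, v n * a n = c * (v 0 * g 0 - v N * g N) +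
      c ^ 2 * ∑ n ∈ Finset.range N, (v n - v (n + 1)) * (a n - a (n + 1)) :=
    calc ∑ n ∈ Finset.range N, v n * a n
          = c * ∑ n ∈ Finset.range N, v n * (g n - g (n + 1)) := by
          rw [Finset.mul_sum]; exact Finset.sum_congr rfl fun n _ => by rw [ha]; ring
      _ = c * (v 0 * g 0 - v N * g N - ∑ n ∈ Finset.range N, (v n - v (n + 1)) * g (n + 1)) := by
          rw [sum_range_mul_sub_succ_eq]
      _ = _ := by
          have : ∑ n ∈ Finset.range N, (v n - v (n + 1)) * g (n + 1) =
              -c * ∑ n ∈ Finset.range N, (v n - v (n + 1)) * (a n - a (n + 1)) := by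
            rw [Finset.mul_sum]; exact Finset.sum_congr rfl fun n _ => by rw [hg]; ring
          rw [this]; ring
  have hcot : v 0 * cot y / 2 = c * (v 0 * g 0) := by
    simp only [c, g, cot_eq_cos_div_sin]; push_cast; field_simp; ring_nf
  have hlast : |c * (v N * g N)| ≤ v N / (2 * |sin y|) :=
    calc |c * (v N * g N)| = v N * |g N| / (2 * |sin y|) := by
          simp only [c, abs_mul, abs_div, abs_of_nonneg (hv₀ N)]; norm_num; ring
      _ ≤ v N / (2 * |sin y|) := by
          gcongr; exact mul_le_of_le_one_right (hv₀ N) (abs_cos_le_one _)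
  have hrest : |c ^ 2 * ∑ n ∈ Finset.range N, (v n - v (n + 1)) * (a n - a (n + 1))|
      ≤ (v 0 - v 1) / (2 * sin y ^ 2) := by
    have := abs_sum_range_mul_sub_succ_le (g := a) hv' hw₀ (fun n => abs_sin_le_one _) N
    calc _ = |∑ n ∈ Finset.range N, (v n - v (n + 1)) * (a n - a (n + 1))|
          / (4 * sin y ^ 2) := by
          rw [abs_mul, abs_of_nonneg (sq_nonneg c)]; simp only [c]; field_simp; ring
      _ ≤ 2 * 1 * (v 0 - v (0 + 1)) / (4 * sin y ^ 2) := by gcongr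
      _ = (v 0 - v 1) / (2 * sin y ^ 2) := by field_simp; ring
  rw [hsum, hcot]
  calc _ = |c ^ 2 * ∑ n ∈ Finset.range N, (v n - v (n + 1)) * (a n - a (n + 1))
        - c * (v N * g N)| := by ring_nf
    _ ≤ _ := (abs_sub _ _).trans (by linarith)

theorem abs_sub_half_cot_le_of_tendsto {σ y L : ℝ} (hσ : 0 < σ) (hy : sin y ≠ 0)
    (hL : Tendsto (fun N => ∑ n ∈ Finset.range N, ((n : ℝ) + 1) ^ (-σ) * sin (2 * (n + 1) * y))
      atTop (𝓝 L)) :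
    |L - cot y / 2| ≤ (1 - 2 ^ (-σ)) / (2 * sin y ^ 2) := by
  set v : ℕ → ℝ := fun n => ((n : ℝ) + 1) ^ (-σ)
  have hv : Antitone v := fun m n hmn =>
    rpow_le_rpow_of_nonpos (by positivity) (by simpa using hmn) (by linarith)
  have hv' : Antitone fun n => v n - v (n + 1) := by
    convert (convexOn_rpow_of_nonpos (neg_nonpos.2 hσ.le)).antitone_sub_nat_succ using 3
    simp only [v]; push_cast; ring_nf
  have hv_lim : Tendsto v atTop (𝓝 0) :=
    (tendsto_rpow_neg_atTop hσ).comp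
      (tendsto_atTop_add_const_right _ 1 tendsto_natCast_atTop_atTop)
  have hbound := abs_sum_range_mul_sin_sub_le hv (fun n => by positivity) hv' hy
  have := le_of_tendsto_of_tendsto' (hL.sub_const _).abs
    ((hv_lim.div_const _).add_const _) hbound
  norm_num [v] at this ⊢; exact this

/-- For `0 < x < 1`, the limit as `s → 1⁻` (along real `s < 1`) of the series
`∑_{n=1}^∞ sin(2nπx)/n^{1-s}` equals `(1/2) · cot(πx)`. -/
theorem stmt0 (x : ℝ) (hx0 : 0 < x) (hx1 : x < 1) (F : ℝ → ℝ)
    (hF : ∀ s : ℝ, s < 1 →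
      Tendsto (fun N : ℕ => ∑ n ∈ Finset.range N,
        Real.sin (2 * π * (n + 1) * x) / ((n : ℝ) + 1) ^ (1 - s)) atTop (𝓝 (F s))) :
    Tendsto F (𝓝[<] 1) (𝓝 ((1 / 2) * Real.cot (π * x))) := by
  have hy : sin (π * x) ≠ 0 :=
    (sin_pos_of_pos_of_lt_pi (by positivity) (by nlinarith [pi_pos])).ne'
  have hbound : ∀ s < 1,
      dist (F s) (1 / 2 * cot (π * x)) ≤ (1 - 2 ^ (-(1 - s))) / (2 * sin (π * x) ^ 2) := by
    intro s hs
    rw [dist_eq, one_div_mul_eq_div]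
    refine abs_sub_half_cot_le_of_tendsto (sub_pos.2 hs) hy ((hF s hs).congr fun N => ?_)
    refine Finset.sum_congr rfl fun n _ => ?_
    rw [div_eq_inv_mul, ← rpow_neg (by positivity)]
    ring_nf
  have hcont :
      Tendsto (fun s : ℝ => (1 - 2 ^ (-(1 - s))) / (2 * sin (π * x) ^ 2)) (𝓝[<] 1) (𝓝 0) := by
    have : ContinuousAt (fun s : ℝ => (1 - 2 ^ (-(1 - s))) / (2 * sin (π * x) ^ 2)) 1 := by
      fun_prop (disch := norm_num)
    simpa using this.tendsto.mono_left nhdsWithin_le_nhds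
  rw [tendsto_iff_dist_tendsto_zero]
  exact squeeze_zero' (Eventually.of_forall fun s => dist_nonneg)
    (eventually_nhdsWithin_of_forall hbound) hcont
end

section
/- For 0 < x < 1, the limit as s → 1⁻ of ∑_{n=1}^∞ cos(2nπx)/n^{1-s} equals −1/2. -/
open Filter Real Topology Finset

/-! With `z = e^{2πix}` (so `‖z‖ = 1`, `z ≠ 1`) the series is the real part of
`∑ aₙ z^{n+1}`, `aₙ = (n+1)^{s-1}`. Multiplying by `z - 1` and telescoping (Abel summation),
`z ∑_{n<N} aₙ zⁿ = -z/(z-1) + a_N z^{N+1}/(z-1) + z²/(z-1)² · (z-1) ∑_{n<N} (aₙ - aₙ₊₁) zⁿ`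
(as `a₀ = 1`), and `Re (z/(z-1)) = 1/2` on the unit circle. As `n ↦ (n+1)^{s-1}` is convex, the differences
`aₙ - aₙ₊₁` decrease, so the same telescoping bounds the last factor by
`2(a₀ - a₁) = 2(1 - 2^{s-1})`, which tends to `0` as `s → 1⁻`. -/

theorem sub_one_mul_sum_range_mul_pow (z : ℂ) (c : ℕ → ℝ) (N : ℕ) :
    (z - 1) * ∑ n ∈ range N, (c n : ℂ) * z ^ n
      = c N * z ^ N - c 0 + z * ∑ n ∈ range N, ((c n - c (n + 1) : ℝ) : ℂ) * z ^ n := by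
  induction N with
  | zero => simp
  | succ N ih =>
    rw [sum_range_succ, sum_range_succ, mul_add, ih]
    push_cast
    ring

theorem norm_sub_one_mul_sum_range_mul_pow_le {z : ℂ} (hz : ‖z‖ ≤ 1) {c : ℕ → ℝ}
    (hc : Antitone c) (hc0 : ∀ n, 0 ≤ c n) (N : ℕ) :
    ‖(z - 1) * ∑ n ∈ range N, (c n : ℂ) * z ^ n‖ ≤ 2 * c 0 := by
  have hpow : ∀ n, ‖z ^ n‖ ≤ 1 := fun n => by
    rw [norm_pow]; exact pow_le_one₀ (norm_nonneg _) hz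
  have hterm : ∀ n, ‖((c n - c (n + 1) : ℝ) : ℂ) * z ^ n‖ ≤ c n - c (n + 1) := by
    intro n
    rw [norm_mul, Complex.norm_real, Real.norm_of_nonneg (sub_nonneg.2 (hc n.le_succ))]
    exact mul_le_of_le_one_right (sub_nonneg.2 (hc n.le_succ)) (hpow n)
  rw [sub_one_mul_sum_range_mul_pow]
  calc _ ≤ ‖(c N : ℂ) * z ^ N‖ + ‖(c 0 : ℂ)‖
          + ‖z‖ * ∑ n ∈ range N, ‖((c n - c (n + 1) : ℝ) : ℂ) * z ^ n‖ := by
        refine (norm_add_le _ _).trans (add_le_add (norm_sub_le _ _) ?_)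
        rw [norm_mul]
        exact mul_le_mul_of_nonneg_left (norm_sum_le _ _) (norm_nonneg _)
    _ ≤ c N + c 0 + 1 * ∑ n ∈ range N, (c n - c (n + 1)) := by
        rw [norm_mul, Complex.norm_real, Complex.norm_real, Real.norm_of_nonneg (hc0 N),
          Real.norm_of_nonneg (hc0 0)]
        gcongr with n
        · exact mul_le_of_le_one_right (hc0 N) (hpow N)
        · exact hterm n
    _ = 2 * c 0 := by rw [sum_range_sub']; ring

theorem Complex.re_div_sub_one_eq_half {z : ℂ} (hz : ‖z‖ = 1) (hz1 : z ≠ 1) :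
    (z / (z - 1)).re = 1 / 2 := by
  have hnormSq : z.re * z.re + z.im * z.im = 1 := by
    rw [← Complex.normSq_apply, ← Complex.sq_norm, hz, one_pow]
  have hre : z.re ≠ 1 := fun h => hz1 (Complex.ext h (by rw [Complex.one_im]; nlinarith))
  rw [Complex.div_re, Complex.normSq_apply]
  simp only [Complex.sub_re, Complex.one_re, Complex.sub_im, Complex.one_im, sub_zero]
  have hden : (z.re - 1) * (z.re - 1) + z.im * z.im ≠ 0 := fun h => hre (by nlinarith)
  field_simp
  nlinarith

theorem abs_sum_range_mul_re_pow_succ_add_half_le {z : ℂ} (hz : ‖z‖ = 1) (hz1 : z ≠ 1)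
    {a : ℕ → ℝ} (ha : Antitone a) (ha0 : ∀ n, 0 ≤ a n)
    (hconv : Antitone fun n => a n - a (n + 1)) (N : ℕ) :
    |∑ n ∈ range N, a n * (z ^ (n + 1)).re + a 0 / 2|
      ≤ a N / ‖z - 1‖ + 2 * (a 0 - a 1) / ‖z - 1‖ ^ 2 := by
  set S := ∑ n ∈ range N, (a n : ℂ) * z ^ n
  set D := ∑ n ∈ range N, ((a n - a (n + 1) : ℝ) : ℂ) * z ^ n
  have hS : (z - 1) * S = a N * z ^ N - a 0 + z * D := sub_one_mul_sum_range_mul_pow z a N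
  have hD : ‖(z - 1) * D‖ ≤ 2 * (a 0 - a 1) :=
    norm_sub_one_mul_sum_range_mul_pow_le hz.le hconv (fun n => sub_nonneg.2 (ha n.le_succ)) N
  have hsplit : z * S + a 0 * (z / (z - 1))
      = a N * z ^ (N + 1) / (z - 1) + z ^ 2 * ((z - 1) * D) / (z - 1) ^ 2 := by
    field_simp
    linear_combination z * hS
  have hre : (z * S + a 0 * (z / (z - 1))).re
      = ∑ n ∈ range N, a n * (z ^ (n + 1)).re + a 0 / 2 := by
    simp only [S, Complex.add_re, Complex.re_ofReal_mul, Complex.re_div_sub_one_eq_half hz hz1,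
      mul_sum, Complex.re_sum]
    congr 1
    · exact sum_congr rfl fun n _ => by
        rw [mul_left_comm, ← pow_succ', Complex.re_ofReal_mul]
    · ring
  rw [← hre]
  refine (Complex.abs_re_le_norm _).trans ?_
  rw [hsplit]
  refine (norm_add_le _ _).trans (add_le_add ?_ ?_)
  · rw [norm_div, norm_mul, norm_pow, hz, one_pow, mul_one, Complex.norm_real,
      Real.norm_of_nonneg (ha0 N)]
  · rw [norm_div, norm_mul, norm_pow, norm_pow, hz, one_pow, one_mul]
    gcongr

theorem abs_add_half_le_of_tendsto {z : ℂ} (hz : ‖z‖ = 1) (hz1 : z ≠ 1)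
    {a : ℕ → ℝ} (ha : Antitone a) (hconv : Antitone fun n => a n - a (n + 1))
    (ha_lim : Tendsto a atTop (𝓝 0)) {L : ℝ}
    (hL : Tendsto (fun N => ∑ n ∈ range N, a n * (z ^ (n + 1)).re) atTop (𝓝 L)) :
    |L + a 0 / 2| ≤ 2 * (a 0 - a 1) / ‖z - 1‖ ^ 2 := by
  have hbound : Tendsto (fun N => a N / ‖z - 1‖ + 2 * (a 0 - a 1) / ‖z - 1‖ ^ 2) atTop
      (𝓝 (0 / ‖z - 1‖ + 2 * (a 0 - a 1) / ‖z - 1‖ ^ 2)) :=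
    (ha_lim.div_const _).add_const _
  rw [zero_div, zero_add] at hbound
  exact le_of_tendsto_of_tendsto' ((hL.add_const _).abs) hbound
    (abs_sum_range_mul_re_pow_succ_add_half_le hz hz1 ha (ha.le_of_tendsto ha_lim) hconv)

theorem two_mul_rpow_add_one_le_rpow_add_rpow_add_two {u p : ℝ} (hu : 0 < u) (hp : p ≤ 0) :
    2 * (u + 1) ^ p ≤ u ^ p + (u + 2) ^ p := by
  have hsq : ((u + 1) ^ p) ^ 2 ≤ u ^ p * (u + 2) ^ p := by
    rw [sq, ← mul_rpow (by linarith) (by linarith), ← mul_rpow hu.le (by linarith)]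
    exact rpow_le_rpow_of_nonpos (by positivity) (by nlinarith) hp
  nlinarith [sq_nonneg (u ^ p - (u + 2) ^ p), rpow_pos_of_pos hu p,
    rpow_pos_of_pos (by linarith : 0 < u + 2) p, rpow_pos_of_pos (by linarith : 0 < u + 1) p]

theorem antitone_rpow_natCast_add_one {p : ℝ} (hp : p ≤ 0) :
    Antitone fun n : ℕ => ((n : ℝ) + 1) ^ p :=
  antitone_nat_of_succ_le fun n => rpow_le_rpow_of_nonpos (by positivity) (by simp) hp

theorem antitone_rpow_natCast_add_one_sub {p : ℝ} (hp : p ≤ 0) :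
    Antitone fun n : ℕ => ((n : ℝ) + 1) ^ p - ((↑(n + 1) : ℝ) + 1) ^ p := by
  refine antitone_nat_of_succ_le fun n => ?_
  have := two_mul_rpow_add_one_le_rpow_add_rpow_add_two (u := (n : ℝ) + 1) (by positivity) hp
  push_cast
  ring_nf at this ⊢
  linarith

theorem tendsto_rpow_natCast_add_one_atTop {p : ℝ} (hp : p < 0) :
    Tendsto (fun n : ℕ => ((n : ℝ) + 1) ^ p) atTop (𝓝 0) := by
  have := (tendsto_rpow_neg_atTop (neg_pos.2 hp)).comp
    (tendsto_atTop_add_const_right _ 1 tendsto_natCast_atTop_atTop)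
  simpa only [neg_neg, Function.comp_def] using this

theorem abs_add_half_le_of_tendsto_rpow {z : ℂ} (hz : ‖z‖ = 1) (hz1 : z ≠ 1) {p L : ℝ}
    (hp : p < 0)
    (hL : Tendsto (fun N => ∑ n ∈ range N, ((n : ℝ) + 1) ^ p * (z ^ (n + 1)).re) atTop
      (𝓝 L)) :
    |L + 1 / 2| ≤ 2 * (1 - 2 ^ p) / ‖z - 1‖ ^ 2 := by
  simpa [one_add_one_eq_two] using abs_add_half_le_of_tendsto hz hz1 (antitone_rpow_natCast_add_one hp.le)
    (antitone_rpow_natCast_add_one_sub hp.le) (tendsto_rpow_natCast_add_one_atTop hp) hL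

/-- For `0 < x < 1`, the limit as `s → 1⁻` of `∑_{n=1}^∞ cos(2nπx)/n^{1-s}` equals `-1/2`. -/
theorem stmt1 (x : ℝ) (hx0 : 0 < x) (hx1 : x < 1) (F : ℝ → ℝ)
    (hF : ∀ s : ℝ, s < 1 →
      Tendsto (fun N : ℕ => ∑ n ∈ Finset.range N,
        Real.cos (2 * π * (n + 1) * x) / ((n : ℝ) + 1) ^ (1 - s)) atTop (𝓝 (F s))) :
    Tendsto F (𝓝[<] 1) (𝓝 (-(1 / 2))) := by
  set z : ℂ := Complex.exp ((2 * π * x : ℝ) * Complex.I)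
  have hz : ‖z‖ = 1 := Complex.norm_exp_ofReal_mul_I _
  have hz1 : z ≠ 1 := fun h => by
    have hcos := congrArg Complex.re h
    rw [Complex.exp_ofReal_mul_I_re, Complex.one_re,
      cos_eq_one_iff_of_lt_of_lt (by nlinarith [pi_pos]) (by nlinarith [pi_pos])] at hcos
    nlinarith [pi_pos]
  have hre : ∀ n : ℕ, (z ^ (n + 1)).re = cos (2 * π * (n + 1) * x) := fun n => by
    rw [← Complex.exp_nat_mul, ← Complex.exp_ofReal_mul_I_re]
    push_cast
    ring_nf
  have hbound : ∀ s < 1, |F s + 1 / 2| ≤ 2 * (1 - 2 ^ (s - 1)) / ‖z - 1‖ ^ 2 := fun s hs =>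
    abs_add_half_le_of_tendsto_rpow hz hz1 (by linarith) <| (hF s hs).congr fun N =>
      sum_congr rfl fun n _ => by
        rw [hre, ← neg_sub 1 s, rpow_neg (by positivity), div_eq_inv_mul]
  have hbound_lim :
      Tendsto (fun s : ℝ => 2 * (1 - 2 ^ (s - 1)) / ‖z - 1‖ ^ 2) (𝓝[<] 1) (𝓝 0) := by
    have hcont : Continuous fun s : ℝ => 2 * (1 - (2 : ℝ) ^ (s - 1)) / ‖z - 1‖ ^ 2 := by
      fun_prop (disch := norm_num)
    simpa using hcont.continuousAt.tendsto.mono_left (nhdsWithin_le_nhds (a := (1 : ℝ)))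
  have hF_lim : Tendsto (fun s => F s + 1 / 2) (𝓝[<] 1) (𝓝 0) :=
    squeeze_zero_norm' (eventually_nhdsWithin_of_forall hbound) hbound_lim
  exact tendsto_sub_nhds_zero_iff.1 (hF_lim.congr fun s => by ring)
end

section
/- For 0 < x < 1, the limit as s → 1⁻ of ∑_{n=1}^∞ e^{2πinx}/n^{1-s} equals e^{2πix}/(1 − e^{2πix}) = (1/2)(−1 + i·cot(πx)). -/
open Filter Real Topology Complex

/-!
Write `c = e^{2πix}`, so `‖c‖ = 1` and `c ≠ 1`, and `β n = (n+1)^{-t}` with `t = 1 - s`.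
Summing by parts twice turns `L = ∑ c^{n+1} β n` into
`(1 - c)^2 (L - c/(1 - c)) = c^2 (Δβ 0 + ∑ c^{n+1} Δ²β n)`.
Since `x ↦ x^{-t}` is convex, `Δ²β ≥ 0`, and the last sum telescopes to at most `-Δβ 0`, so
`‖L - c/(1 - c)‖ ≤ 2 (1 - 2^{-t}) / ‖1 - c‖^2`, which tends to `0` as `t → 0⁺`.
-/

section SummationByParts

theorem one_sub_mul_sum_range_pow_succ_mul {R : Type*} [CommRing R] (c : R) (b : ℕ → R)
    (N : ℕ) :
    (1 - c) * ∑ n ∈ Finset.range N, c ^ (n + 1) * b n =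
      c * b 0 - c ^ (N + 1) * b N + c * ∑ n ∈ Finset.range N, c ^ (n + 1) * (b (n + 1) - b n) := by
  induction N with
  | zero => simp
  | succ N ih =>
    rw [Finset.sum_range_succ, Finset.sum_range_succ, mul_add, ih]
    ring

variable {𝕜 : Type*} [NormedField 𝕜] {c : 𝕜}

theorem tendsto_sum_range_pow_succ_mul_sub {b : ℕ → 𝕜} {L : 𝕜} (hc : ‖c‖ ≤ 1) (hc0 : c ≠ 0)
    (hb : Tendsto b atTop (𝓝 0))
    (hL : Tendsto (fun N ↦ ∑ n ∈ Finset.range N, c ^ (n + 1) * b n) atTop (𝓝 L)) :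
    Tendsto (fun N ↦ ∑ n ∈ Finset.range N, c ^ (n + 1) * (b (n + 1) - b n)) atTop
      (𝓝 (((1 - c) * L - c * b 0) / c)) := by
  have hboundary : Tendsto (fun N ↦ c ^ (N + 1) * b N) atTop (𝓝 0) := by
    refine squeeze_zero_norm (fun N ↦ ?_) (tendsto_zero_iff_norm_tendsto_zero.mp hb)
    rw [norm_mul, norm_pow]
    exact mul_le_of_le_one_left (norm_nonneg _) (pow_le_one₀ (norm_nonneg _) hc)
  have hlim := ((hL.const_mul (1 - c)).sub_const (c * b 0)).add hboundary
  rw [add_zero] at hlim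
  refine (hlim.div_const c).congr fun N ↦ ?_
  rw [one_sub_mul_sum_range_pow_succ_mul, div_eq_iff hc0]
  ring

end SummationByParts

section RealWeights

variable {𝕜 : Type*} [RCLike 𝕜] {c : 𝕜}

theorem norm_le_of_tendsto_sum_pow_succ_mul_sub {δ : ℕ → ℝ} {M : 𝕜} (hc : ‖c‖ ≤ 1)
    (hδ : Monotone δ) (hδ0 : Tendsto δ atTop (𝓝 0))
    (hM : Tendsto (fun N ↦ ∑ n ∈ Finset.range N, c ^ (n + 1) * ((δ (n + 1) : 𝕜) - δ n)) atTop
      (𝓝 M)) :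
    ‖M‖ ≤ -δ 0 := by
  refine le_of_tendsto' hM.norm fun N ↦ ?_
  calc ‖∑ n ∈ Finset.range N, c ^ (n + 1) * ((δ (n + 1) : 𝕜) - δ n)‖
      ≤ ∑ n ∈ Finset.range N, (δ (n + 1) - δ n) := by
        refine (norm_sum_le _ _).trans (Finset.sum_le_sum fun n _ ↦ ?_)
        rw [norm_mul, norm_pow, ← RCLike.ofReal_sub, RCLike.norm_ofReal,
          abs_of_nonneg (sub_nonneg.mpr (hδ n.le_succ))]
        exact mul_le_of_le_one_left (sub_nonneg.mpr (hδ n.le_succ))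
          (pow_le_one₀ (norm_nonneg _) hc)
    _ = δ N - δ 0 := Finset.sum_range_sub δ N
    _ ≤ -δ 0 := by linarith [hδ.ge_of_tendsto hδ0 N]

theorem norm_sub_div_one_sub_le_of_convex {β : ℕ → ℝ} {L : 𝕜} (hc : ‖c‖ ≤ 1) (hc0 : c ≠ 0)
    (hc1 : c ≠ 1) (hβ : Tendsto β atTop (𝓝 0)) (hconv : Monotone fun n ↦ β (n + 1) - β n)
    (hL : Tendsto (fun N ↦ ∑ n ∈ Finset.range N, c ^ (n + 1) * (β n : 𝕜)) atTop (𝓝 L)) :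
    ‖L - c * β 0 / (1 - c)‖ ≤ 2 * (β 0 - β 1) / ‖1 - c‖ ^ 2 := by
  set δ : ℕ → ℝ := fun n ↦ β (n + 1) - β n
  have hδ : Tendsto δ atTop (𝓝 0) := by
    simpa using (hβ.comp (tendsto_add_atTop_nat 1)).sub hβ
  have hδ0 : δ 0 ≤ 0 := hconv.ge_of_tendsto hδ 0
  have cast_tendsto {u : ℕ → ℝ} (hu : Tendsto u atTop (𝓝 0)) :
      Tendsto (fun n ↦ (u n : 𝕜)) atTop (𝓝 0) := by
    simpa [Function.comp_def] using ((RCLike.continuous_ofReal (K := 𝕜)).tendsto 0).comp hu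
  have hL₁ : Tendsto (fun N ↦ ∑ n ∈ Finset.range N, c ^ (n + 1) * (δ n : 𝕜)) atTop
      (𝓝 (((1 - c) * L - c * β 0) / c)) := by
    simpa only [δ, RCLike.ofReal_sub] using
      tendsto_sum_range_pow_succ_mul_sub hc hc0 (cast_tendsto hβ) hL
  set M := ((1 - c) * (((1 - c) * L - c * β 0) / c) - c * δ 0) / c
  have hL₂ := tendsto_sum_range_pow_succ_mul_sub (b := fun n ↦ (δ n : 𝕜)) hc hc0
    (cast_tendsto hδ) hL₁
  have hM : ‖M‖ ≤ -δ 0 := norm_le_of_tendsto_sum_pow_succ_mul_sub (δ := δ) hc hconv hδ hL₂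
  have h1c : 1 - c ≠ 0 := sub_ne_zero.mpr (Ne.symm hc1)
  have key : L - c * β 0 / (1 - c) = c ^ 2 * (δ 0 + M) / (1 - c) ^ 2 := by
    simp only [M]
    field_simp
    ring
  rw [key, norm_div, norm_mul, norm_pow, norm_pow]
  gcongr ?_ / _
  calc ‖c‖ ^ 2 * ‖(δ 0 : 𝕜) + M‖ ≤ ‖(δ 0 : 𝕜) + M‖ :=
        mul_le_of_le_one_left (norm_nonneg _) (pow_le_one₀ (norm_nonneg _) hc)
    _ ≤ |δ 0| + ‖M‖ := by simpa only [RCLike.norm_ofReal] using norm_add_le (δ 0 : 𝕜) M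
    _ ≤ 2 * (β 0 - β 1) := by
        rw [abs_of_nonpos hδ0]
        linarith

end RealWeights

theorem convexOn_rpow_neg {t : ℝ} (ht : 0 ≤ t) : ConvexOn ℝ (Set.Ioi 0) fun x : ℝ ↦ x ^ (-t) := by
  refine ⟨convex_Ioi 0, fun x (hx : 0 < x) y (hy : 0 < y) a b ha hb hab ↦ ?_⟩
  have hlog := strictConcaveOn_log_Ioi.concaveOn.2 hx hy ha hb hab
  simp only [smul_eq_mul] at hlog ⊢
  have hxy : 0 < a * x + b * y := convex_Ioi (0 : ℝ) hx hy ha hb hab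
  rw [rpow_def_of_pos hx, rpow_def_of_pos hy, rpow_def_of_pos hxy]
  calc Real.exp (Real.log (a * x + b * y) * -t)
      ≤ Real.exp (a * (Real.log x * -t) + b * (Real.log y * -t)) :=
        Real.exp_le_exp.2 (by nlinarith)
    _ ≤ a * Real.exp (Real.log x * -t) + b * Real.exp (Real.log y * -t) :=
        convexOn_exp.2 trivial trivial ha hb hab

theorem monotone_rpow_neg_succ_sub {t : ℝ} (ht : 0 ≤ t) :
    Monotone fun n : ℕ ↦ (((n + 1 : ℕ) : ℝ) + 1) ^ (-t) - ((n : ℝ) + 1) ^ (-t) := by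
  refine monotone_nat_of_le_succ fun n ↦ ?_
  have hmid := (convexOn_rpow_neg ht).2 (show (0 : ℝ) < n + 1 by positivity)
    (show (0 : ℝ) < n + 3 by positivity) (by norm_num : (0 : ℝ) ≤ 1 / 2)
    (by norm_num : (0 : ℝ) ≤ 1 / 2) (by norm_num)
  simp only [smul_eq_mul] at hmid
  push_cast
  ring_nf at hmid ⊢
  linarith

theorem exp_two_pi_I_mul_ne_one {x : ℝ} (hx0 : 0 < x) (hx1 : x < 1) :
    Complex.exp (2 * π * I * x) ≠ 1 := by
  intro h
  have hsin : 0 < Real.sin (π * x) :=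
    Real.sin_pos_of_pos_of_lt_pi (by positivity) (by nlinarith [pi_pos])
  have := Complex.norm_exp_I_mul_ofReal_sub_one (2 * π * x)
  rw [show I * ((2 * π * x : ℝ) : ℂ) = 2 * π * I * x by push_cast; ring, h, sub_self, norm_zero,
    show 2 * π * x / 2 = π * x by ring, Real.norm_eq_abs, abs_of_pos (by positivity)] at this
  linarith

theorem exp_div_one_sub_exp_eq_cot {z : ℂ} (hz : Complex.exp (2 * π * I * z) ≠ 1) :
    Complex.exp (2 * π * I * z) / (1 - Complex.exp (2 * π * I * z)) =
      1 / 2 * (-1 + I * Complex.cot (π * z)) := by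
  have h1 : 1 - Complex.exp (2 * π * I * z) ≠ 0 := sub_ne_zero.mpr (Ne.symm hz)
  rw [Complex.cot_pi_eq_exp_ratio]
  field_simp
  ring

theorem norm_sub_div_one_sub_le_of_rpow {c L : ℂ} {t : ℝ} (ht : 0 < t) (hc : ‖c‖ ≤ 1)
    (hc0 : c ≠ 0) (hc1 : c ≠ 1)
    (hL : Tendsto (fun N ↦ ∑ n ∈ Finset.range N, c ^ (n + 1) * (((n : ℝ) + 1) ^ (-t) : ℝ))
      atTop (𝓝 L)) :
    ‖L - c / (1 - c)‖ ≤ 2 * (1 - 2 ^ (-t)) / ‖1 - c‖ ^ 2 := by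
  have hβ : Tendsto (fun n : ℕ ↦ ((n : ℝ) + 1) ^ (-t)) atTop (𝓝 0) :=
    (tendsto_rpow_neg_atTop ht).comp
      (tendsto_atTop_add_const_right _ 1 tendsto_natCast_atTop_atTop)
  have h := norm_sub_div_one_sub_le_of_convex hc hc0 hc1 hβ (monotone_rpow_neg_succ_sub ht.le) hL
  norm_num at h
  exact h

theorem exp_mul_div_cpow_eq_pow_mul_rpow (x s : ℝ) (n : ℕ) :
    Complex.exp (2 * π * I * (n + 1) * x) / ((n : ℂ) + 1) ^ ((1 : ℂ) - (s : ℂ)) =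
      Complex.exp (2 * π * I * x) ^ (n + 1) * (((n : ℝ) + 1) ^ (-(1 - s)) : ℝ) := by
  rw [← Complex.exp_nat_mul, Real.rpow_neg (by positivity), Complex.ofReal_inv,
    Complex.ofReal_cpow (by positivity), div_eq_mul_inv]
  push_cast
  ring_nf

/-- For `0 < x < 1`, the limit as `s → 1⁻` of `∑_{n=1}^∞ e^{2πinx}/n^{1-s}` equals
`e^{2πix}/(1 - e^{2πix}) = (1/2)(-1 + i·cot(πx))`. -/
theorem stmt2 (x : ℝ) (hx0 : 0 < x) (hx1 : x < 1) (F : ℝ → ℂ)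
    (hF : ∀ s : ℝ, s < 1 →
      Tendsto (fun N : ℕ => ∑ n ∈ Finset.range N,
        Complex.exp (2 * π * Complex.I * (n + 1) * x) / ((n : ℂ) + 1) ^ ((1 : ℂ) - (s : ℂ)))
        atTop (𝓝 (F s))) :
    Tendsto F (𝓝[<] 1)
      (𝓝 (Complex.exp (2 * π * Complex.I * x) / (1 - Complex.exp (2 * π * Complex.I * x)))) ∧
    Complex.exp (2 * π * Complex.I * x) / (1 - Complex.exp (2 * π * Complex.I * x)) =
      (1 / 2) * (-1 + Complex.I * (Real.cot (π * x) : ℂ)) := by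
  set c := Complex.exp (2 * π * I * x)
  have hc1 : c ≠ 1 := exp_two_pi_I_mul_ne_one hx0 hx1
  have hc : ‖c‖ = 1 := by simp [c, Complex.norm_exp]
  have hc0 : c ≠ 0 := Complex.exp_ne_zero _
  have hbound : ∀ s < 1, ‖F s - c / (1 - c)‖ ≤ 2 * (1 - 2 ^ (-(1 - s))) / ‖1 - c‖ ^ 2 :=
    fun s hs ↦ norm_sub_div_one_sub_le_of_rpow (by linarith) hc.le hc0 hc1 <| by
      simpa only [exp_mul_div_cpow_eq_pow_mul_rpow] using hF s hs
  have hbound_lim : Tendsto (fun s : ℝ ↦ 2 * (1 - (2 : ℝ) ^ (-(1 - s))) / ‖1 - c‖ ^ 2)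
      (𝓝[<] 1) (𝓝 0) := by
    have hcont : Continuous fun s : ℝ ↦ 2 * (1 - (2 : ℝ) ^ (-(1 - s))) / ‖1 - c‖ ^ 2 :=
      by fun_prop (disch := norm_num)
    simpa using (hcont.tendsto 1).mono_left nhdsWithin_le_nhds
  refine ⟨?_, by rw [exp_div_one_sub_exp_eq_cot hc1, Complex.ofReal_cot, Complex.ofReal_mul]⟩
  rw [tendsto_iff_norm_sub_tendsto_zero]
  exact squeeze_zero' (Eventually.of_forall fun _ ↦ norm_nonneg _)
    (eventually_nhdsWithin_of_forall hbound) hbound_lim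
end

section
/- For 0 < x < 1, the limit as s → 1⁻ of ∑_{n=1}^∞ (−1)^{n+1} sin(nπx)/n^{1-s} equals (1/2)·tan(πx/2). -/
/-!
Put `t = 1 - s`, `b k = (k + 1) ^ (-t)` and `z = -e^{iπx}`, so that the `N`-th partial sum is
`Im (e^{iπx} ∑_{k<N} z^k b k)`. Shifting the sum once gives
`(1 - z) ∑_{k<N} z^k b k = b 0 - z^N b N - z ∑_{k<N} z^k (b k - b (k+1))`.
Since `b` is convex, the differences `b k - b (k+1)` are nonnegative and decreasing, so Abel's
inequality bounds the last series by `(b 0 - b 1) · sup_n ‖∑_{k<n} z^k‖ ≤ 2 (1 - 2^{-t}) / ‖1 - z‖`,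
which vanishes as `t → 0⁺`. Hence the sum of the series tends to
`Im (e^{iπx} / (1 + e^{iπx})) = tan (πx/2) / 2`.
-/

open Filter Real Topology Finset Complex

theorem norm_sum_range_smul_le_of_antitone {E : Type*} [SeminormedAddCommGroup E]
    [NormedSpace ℝ E] {f : ℕ → ℝ} {g : ℕ → E} {C : ℝ} (hf : Antitone f) (hf0 : ∀ n, 0 ≤ f n)
    (hg : ∀ n, ‖∑ i ∈ range n, g i‖ ≤ C) (n : ℕ) :
    ‖∑ i ∈ range n, f i • g i‖ ≤ C * f 0 := by
  cases n with
  | zero => simpa using mul_nonneg (by simpa using hg 0) (hf0 0)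
  | succ m =>
    rw [sum_range_by_parts, Nat.add_sub_cancel]
    calc ‖f m • ∑ i ∈ range (m + 1), g i - ∑ i ∈ range m, (f (i + 1) - f i) • ∑ j ∈ range (i + 1), g j‖
        ≤ f m * C + ∑ i ∈ range m, (f i - f (i + 1)) * C := by
          refine (norm_sub_le _ _).trans (add_le_add ?_ ((norm_sum_le _ _).trans ?_))
          · rw [norm_smul, Real.norm_of_nonneg (hf0 m)]
            exact mul_le_mul_of_nonneg_left (hg _) (hf0 m)
          · refine sum_le_sum fun i _ => ?_
            rw [norm_smul, Real.norm_of_nonpos (sub_nonpos.2 (hf i.le_succ)), neg_sub]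
            exact mul_le_mul_of_nonneg_left (hg _) (sub_nonneg.2 (hf i.le_succ))
      _ = C * f 0 := by rw [← sum_mul, sum_range_sub']; ring

theorem norm_geom_sum_le {𝕜 : Type*} [NormedField 𝕜] {z : 𝕜} (hz : ‖z‖ ≤ 1) (hz1 : z ≠ 1)
    (n : ℕ) : ‖∑ i ∈ range n, z ^ i‖ ≤ 2 / ‖1 - z‖ := by
  have h1z : 0 < ‖1 - z‖ := norm_pos_iff.2 (sub_ne_zero.2 hz1.symm)
  rw [le_div_iff₀ h1z, ← norm_mul, geom_sum_mul_neg]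
  calc ‖1 - z ^ n‖ ≤ ‖(1 : 𝕜)‖ + ‖z ^ n‖ := norm_sub_le _ _
    _ ≤ 2 := by rw [norm_one, norm_pow]; linarith [pow_le_one₀ (norm_nonneg z) hz (n := n)]

theorem one_sub_mul_sum_range_pow_mul {R : Type*} [CommRing R] (z : R) (b : ℕ → R) (N : ℕ) :
    (1 - z) * ∑ k ∈ range N, z ^ k * b k
      = b 0 - z ^ N * b N - z * ∑ k ∈ range N, z ^ k * (b k - b (k + 1)) := by
  induction N with
  | zero => simp
  | succ N ih => rw [sum_range_succ, sum_range_succ, mul_add, ih]; ring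

theorem exists_tendsto_sum_pow_mul_of_convex {𝕜 : Type*} [RCLike 𝕜] {z : 𝕜} (hz : ‖z‖ ≤ 1)
    (hz1 : z ≠ 1) {b : ℕ → ℝ} (hb : Antitone b) (hb0 : Tendsto b atTop (𝓝 0))
    (hbc : Antitone fun k => b k - b (k + 1)) :
    ∃ L : 𝕜, Tendsto (fun N => ∑ k ∈ range N, z ^ k * (b k : 𝕜)) atTop (𝓝 L) ∧
      ‖(1 - z) * L - b 0‖ ≤ 2 / ‖1 - z‖ * (b 0 - b 1) := by
  set c : ℕ → ℝ := fun k => b k - b (k + 1) with hc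
  have hb_nonneg : ∀ k, 0 ≤ b k := hb.le_of_tendsto hb0
  have hc_nonneg : ∀ k, 0 ≤ c k := fun k => sub_nonneg.2 (hb k.le_succ)
  have hc_summable : Summable c := summable_of_sum_range_le (c := b 0) hc_nonneg fun N => by
    simp only [hc, sum_range_sub']; linarith [hb_nonneg N]
  have hnorm_le : ∀ k, ‖z ^ k * (c k : 𝕜)‖ ≤ c k := fun k => by
    rw [norm_mul, norm_pow, RCLike.norm_ofReal, abs_of_nonneg (hc_nonneg k)]
    exact mul_le_of_le_one_left (hc_nonneg k) (pow_le_one₀ (norm_nonneg z) hz)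
  obtain ⟨R, hR⟩ := Summable.of_norm_bounded hc_summable hnorm_le
  have hR_le : ‖R‖ ≤ 2 / ‖1 - z‖ * c 0 := by
    refine le_of_tendsto' hR.tendsto_sum_nat.norm fun N => ?_
    simpa only [RCLike.real_smul_eq_coe_mul, mul_comm] using
      norm_sum_range_smul_le_of_antitone hbc hc_nonneg (norm_geom_sum_le hz hz1) N
  have h1z : (1 - z) ≠ 0 := sub_ne_zero.2 hz1.symm
  refine ⟨(1 - z)⁻¹ * (b 0 - z * R), ?_, ?_⟩
  · have hpow : Tendsto (fun N => z ^ N * (b N : 𝕜)) atTop (𝓝 0) := by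
      refine squeeze_zero_norm (fun N => ?_) hb0
      rw [norm_mul, norm_pow, RCLike.norm_ofReal, abs_of_nonneg (hb_nonneg N)]
      exact mul_le_of_le_one_left (hb_nonneg N) (pow_le_one₀ (norm_nonneg z) hz)
    have hlim := ((tendsto_const_nhds (x := (b 0 : 𝕜))).sub hpow).sub
      (hR.tendsto_sum_nat.const_mul z) |>.const_mul (1 - z)⁻¹
    rw [sub_zero] at hlim
    refine hlim.congr fun N => ?_
    simp only [hc, RCLike.ofReal_sub]
    rw [← one_sub_mul_sum_range_pow_mul z (fun k => (b k : 𝕜)), inv_mul_cancel_left₀ h1z]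
  · rw [mul_inv_cancel_left₀ h1z, sub_sub_cancel_left, norm_neg, norm_mul]
    exact (mul_le_of_le_one_left (norm_nonneg R) hz).trans hR_le

theorem two_mul_rpow_neg_le_add {a t : ℝ} (ha : 0 < a) (ht : 0 ≤ t) :
    2 * (a + 1) ^ (-t) ≤ a ^ (-t) + (a + 2) ^ (-t) := by
  have hsq : ((a + 1) ^ (-t)) ^ 2 ≤ a ^ (-t) * (a + 2) ^ (-t) := by
    rw [sq, ← mul_rpow (by positivity) (by positivity), ← mul_rpow ha.le (by positivity)]
    exact rpow_le_rpow_of_nonpos (by positivity) (by nlinarith) (neg_nonpos.2 ht)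
  nlinarith [sq_nonneg (a ^ (-t) - (a + 2) ^ (-t)), rpow_nonneg ha.le (-t),
    rpow_nonneg (by positivity : 0 ≤ a + 2) (-t), rpow_nonneg (by positivity : 0 ≤ a + 1) (-t)]

theorem exists_tendsto_sum_pow_mul_rpow_neg {𝕜 : Type*} [RCLike 𝕜] {z : 𝕜} (hz : ‖z‖ ≤ 1)
    (hz1 : z ≠ 1) {t : ℝ} (ht : 0 < t) :
    ∃ L : 𝕜, Tendsto (fun N => ∑ k ∈ range N, z ^ k * (((k + 1 : ℝ) ^ (-t) : ℝ) : 𝕜)) atTop (𝓝 L) ∧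
      ‖L - (1 - z)⁻¹‖ ≤ 2 / ‖1 - z‖ ^ 2 * (1 - 2 ^ (-t)) := by
  set b : ℕ → ℝ := fun k => (k + 1 : ℝ) ^ (-t)
  have hb : Antitone b := antitone_nat_of_succ_le fun k =>
    rpow_le_rpow_of_nonpos (by positivity) (by push_cast; linarith) (neg_nonpos.2 ht.le)
  have hb0 : Tendsto b atTop (𝓝 0) :=
    (tendsto_rpow_neg_atTop ht).comp (tendsto_atTop_add_const_right _ 1 tendsto_natCast_atTop_atTop)
  have hbc : Antitone fun k => b k - b (k + 1) := antitone_nat_of_succ_le fun k => by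
    have := two_mul_rpow_neg_le_add (a := k + 1) (by positivity) ht.le
    simp only [b]; push_cast
    rw [show (k : ℝ) + 1 + 1 + 1 = k + 1 + 2 by ring]; linarith
  obtain ⟨L, hL, hbound⟩ := exists_tendsto_sum_pow_mul_of_convex hz hz1 hb hb0 hbc
  refine ⟨L, hL, ?_⟩
  have h1z : 0 < ‖1 - z‖ := norm_pos_iff.2 (sub_ne_zero.2 hz1.symm)
  have hb01 : b 0 = 1 ∧ b 1 = 2 ^ (-t) := by norm_num [b]
  rw [hb01.1, hb01.2, RCLike.ofReal_one] at hbound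
  calc ‖L - (1 - z)⁻¹‖ = ‖(1 - z) * L - 1‖ / ‖1 - z‖ := by
        rw [eq_div_iff h1z.ne', ← norm_mul]; congr 1; field_simp
    _ ≤ 2 / ‖1 - z‖ * (1 - 2 ^ (-t)) / ‖1 - z‖ := by gcongr
    _ = 2 / ‖1 - z‖ ^ 2 * (1 - 2 ^ (-t)) := by ring

theorem exp_ofReal_mul_I_eq_sq (θ : ℝ) : cexp (θ * I) = cexp ((θ / 2 : ℝ) * I) ^ 2 := by
  rw [← Complex.exp_nat_mul]; push_cast; ring_nf

theorem one_add_exp_mul_I (θ : ℝ) :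
    1 + cexp (θ * I) = 2 * Real.cos (θ / 2) * cexp ((θ / 2 : ℝ) * I) := by
  have hpyth : (Real.cos (θ / 2) : ℂ) ^ 2 + Real.sin (θ / 2) ^ 2 = 1 := by
    exact_mod_cast Real.cos_sq_add_sin_sq (θ / 2)
  rw [exp_ofReal_mul_I_eq_sq, Complex.exp_mul_I, ← ofReal_cos, ← ofReal_sin]
  linear_combination (-1 : ℂ) * hpyth + (Real.sin (θ / 2) : ℂ) ^ 2 * I_sq

theorem im_exp_mul_inv_one_add_exp {θ : ℝ} (hθ : Real.cos (θ / 2) ≠ 0) :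
    (cexp (θ * I) * (1 + cexp (θ * I))⁻¹).im = Real.tan (θ / 2) / 2 := by
  have : cexp (θ * I) * (1 + cexp (θ * I))⁻¹
      = ((2 * Real.cos (θ / 2))⁻¹ : ℝ) * cexp ((θ / 2 : ℝ) * I) := by
    rw [one_add_exp_mul_I, exp_ofReal_mul_I_eq_sq θ]
    push_cast
    field_simp
  rw [this, im_ofReal_mul, exp_ofReal_mul_I_im, Real.tan_eq_sin_div_cos]
  field_simp

theorem im_exp_mul_neg_exp_pow (θ : ℝ) (n : ℕ) :
    (cexp (θ * I) * (-cexp (θ * I)) ^ n).im = (-1) ^ n * Real.sin ((n + 1) * θ) := by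
  have : cexp (θ * I) * (-cexp (θ * I)) ^ n = ((-1) ^ n : ℝ) * cexp (((n + 1) * θ : ℝ) * I) := by
    rw [neg_pow, mul_left_comm, ← Complex.exp_nat_mul, ← Complex.exp_add]
    push_cast; ring_nf
  rw [this, im_ofReal_mul, exp_ofReal_mul_I_im]

theorem exists_tendsto_sum_neg_one_pow_mul_sin_div_rpow {θ : ℝ} (hθ : Real.cos (θ / 2) ≠ 0)
    {t : ℝ} (ht : 0 < t) :
    ∃ S : ℝ, Tendsto (fun N : ℕ => ∑ n ∈ range N,
        (-1 : ℝ) ^ n * Real.sin ((n + 1) * θ) / ((n : ℝ) + 1) ^ t) atTop (𝓝 S) ∧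
      |S - Real.tan (θ / 2) / 2| ≤ 2 / ‖1 + cexp (θ * I)‖ ^ 2 * (1 - 2 ^ (-t)) := by
  set u := cexp (θ * I) with hu_def
  have hu : ‖u‖ = 1 := norm_exp_ofReal_mul_I θ
  have h1u : 1 + u ≠ 0 := by
    rw [hu_def, one_add_exp_mul_I]
    exact mul_ne_zero (mul_ne_zero two_ne_zero (ofReal_ne_zero.2 hθ)) (Complex.exp_ne_zero _)
  have hz : ‖-u‖ ≤ 1 := by rw [norm_neg, hu]
  have hz1 : -u ≠ 1 := fun h => h1u (by linear_combination -h)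
  obtain ⟨L, hL, hLb⟩ := exists_tendsto_sum_pow_mul_rpow_neg (𝕜 := ℂ) hz hz1 ht
  simp only [RCLike.ofReal_eq_complex_ofReal, sub_neg_eq_add] at hL hLb
  refine ⟨(u * L).im, ((continuous_im.tendsto _).comp (hL.const_mul u)).congr fun N => ?_, ?_⟩
  · rw [Function.comp_apply, mul_sum, im_sum]
    refine sum_congr rfl fun n _ => ?_
    rw [← mul_assoc, im_mul_ofReal, hu_def, im_exp_mul_neg_exp_pow, rpow_neg (by positivity),
      ← div_eq_mul_inv]
  · rw [← im_exp_mul_inv_one_add_exp hθ, ← hu_def, ← sub_im, ← mul_sub]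
    calc |(u * (L - (1 + u)⁻¹)).im| ≤ ‖u * (L - (1 + u)⁻¹)‖ := abs_im_le_norm _
      _ = ‖L - (1 + u)⁻¹‖ := by rw [norm_mul, hu, one_mul]
      _ ≤ _ := hLb

/-- For `0 < x < 1`, the limit as `s → 1⁻` of `∑_{n=1}^∞ (-1)^{n+1} sin(nπx)/n^{1-s}`
equals `(1/2)·tan(πx/2)`. -/
theorem stmt3 (x : ℝ) (hx0 : 0 < x) (hx1 : x < 1) (F : ℝ → ℝ)
    (hF : ∀ s : ℝ, s < 1 →
      Tendsto (fun N : ℕ => ∑ n ∈ Finset.range N,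
        (-1 : ℝ) ^ n * Real.sin ((n + 1) * π * x) / ((n : ℝ) + 1) ^ (1 - s)) atTop (𝓝 (F s))) :
    Tendsto F (𝓝[<] 1) (𝓝 ((1 / 2) * Real.tan (π * x / 2))) := by
  have hcos : Real.cos (π * x / 2) ≠ 0 :=
    (Real.cos_pos_of_mem_Ioo ⟨by nlinarith [pi_pos], by nlinarith [pi_pos]⟩).ne'
  set K := 2 / ‖1 + cexp ((π * x : ℝ) * I)‖ ^ 2
  have hbound : ∀ s < 1, |F s - 1 / 2 * Real.tan (π * x / 2)| ≤ K * (1 - 2 ^ (-(1 - s))) :=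
    fun s hs => by
      obtain ⟨S, hS, hSb⟩ := exists_tendsto_sum_neg_one_pow_mul_sin_div_rpow hcos (sub_pos.2 hs)
      have hFS : F s = S := tendsto_nhds_unique (hF s hs) (by simpa only [mul_assoc] using hS)
      rwa [hFS, one_div_mul_eq_div]
  have hK : Tendsto (fun s : ℝ => K * (1 - (2 : ℝ) ^ (-(1 - s)))) (𝓝[<] 1) (𝓝 0) := by
    have : Continuous fun s : ℝ => K * (1 - (2 : ℝ) ^ (-(1 - s))) := by
      fun_prop (disch := norm_num)
    simpa using (this.tendsto 1).mono_left nhdsWithin_le_nhds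
  exact tendsto_iff_norm_sub_tendsto_zero.2 <| squeeze_zero' (.of_forall fun _ => norm_nonneg _)
    (eventually_nhdsWithin_of_forall hbound) hK
end

section
/- For 0 < x < 1, the limit as s → 1⁻ of ∑_{n=1}^∞ (−1)^{n+1} cos(nπx)/n^{1-s} equals 1/2. -/
/-!
Write `c = exp (iπx)`, `w = -c` and `aₙ = (n + 1)^(-σ)` with `σ = 1 - s`, so that the partial
sums are `Re (c ∑_{n<N} aₙ wⁿ)`. Summation by parts against the geometric progression gives
`(1 - w) ∑_{n<N} aₙ wⁿ = a₀ - a_N w^N - w ∑_{n<N} (aₙ - aₙ₊₁) wⁿ`, and since `aₙ` is convex the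
same identity applied to the antitone differences bounds the last sum by `2 (a₀ - a₁) / |1 - w|`.
Hence the limit differs from `Re (c / (1 + c)) = 1/2` by at most `2 (1 - 2^(-σ)) / |1 + c|²`,
which tends to `0` as `σ → 0⁺`.
-/

open Filter Real Topology Finset

lemma one_sub_mul_sum_mul_pow {R : Type*} [CommRing R] (a : ℕ → R) (w : R) (N : ℕ) :
    (1 - w) * ∑ n ∈ range N, a n * w ^ n
      = a 0 - a N * w ^ N - w * ∑ n ∈ range N, (a n - a (n + 1)) * w ^ n := by
  induction N with
  | zero => simp
  | succ N ih => rw [sum_range_succ, sum_range_succ, mul_add, ih]; ring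

lemma norm_one_sub_mul_sum_mul_pow_le {a : ℕ → ℝ} (ha : Antitone a) (ha0 : ∀ n, 0 ≤ a n)
    {w : ℂ} (hw : ‖w‖ ≤ 1) (N : ℕ) :
    ‖(1 - w) * ∑ n ∈ range N, (a n : ℂ) * w ^ n‖ ≤ 2 * a 0 := by
  have hΔ : ‖∑ n ∈ range N, ((a n : ℂ) - a (n + 1)) * w ^ n‖ ≤ a 0 - a N := by
    rw [← sum_range_sub' a N]
    refine (norm_sum_le _ _).trans (sum_le_sum fun n _ => ?_)
    rw [norm_mul, ← Complex.ofReal_sub, Complex.norm_real, norm_pow,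
      Real.norm_of_nonneg (sub_nonneg.2 (ha n.le_succ))]
    exact mul_le_of_le_one_right (sub_nonneg.2 (ha n.le_succ)) (pow_le_one₀ (norm_nonneg w) hw)
  rw [one_sub_mul_sum_mul_pow]
  calc _ ≤ ‖(a 0 : ℂ)‖ + ‖(a N : ℂ) * w ^ N‖
        + ‖w * ∑ n ∈ range N, ((a n : ℂ) - a (n + 1)) * w ^ n‖ :=
          (norm_sub_le _ _).trans (add_le_add_left (norm_sub_le _ _) _)
    _ ≤ a 0 + a N + (a 0 - a N) := by
      rw [norm_mul, norm_mul, norm_pow, Complex.norm_real, Complex.norm_real,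
        Real.norm_of_nonneg (ha0 0), Real.norm_of_nonneg (ha0 N)]
      gcongr
      · exact mul_le_of_le_one_right (ha0 N) (pow_le_one₀ (norm_nonneg w) hw)
      · exact mul_le_of_le_one_left (norm_nonneg _) hw |>.trans hΔ
    _ = 2 * a 0 := by ring

lemma norm_sum_mul_pow_sub_le {a : ℕ → ℝ} (ha : Antitone a) (ha0 : ∀ n, 0 ≤ a n)
    (hΔ : Antitone fun n => a n - a (n + 1)) {w : ℂ} (hw : ‖w‖ ≤ 1) (hw1 : w ≠ 1) (N : ℕ) :
    ‖∑ n ∈ range N, (a n : ℂ) * w ^ n - a 0 / (1 - w)‖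
      ≤ a N / ‖1 - w‖ + 2 * (a 0 - a 1) / ‖1 - w‖ ^ 2 := by
  have hw1' : 1 - w ≠ 0 := sub_ne_zero.2 hw1.symm
  have hd : 0 < ‖1 - w‖ := norm_pos_iff.2 hw1'
  set Q := ∑ n ∈ range N, ((a n : ℂ) - a (n + 1)) * w ^ n
  have hQ : ‖Q‖ ≤ 2 * (a 0 - a 1) / ‖1 - w‖ := by
    rw [le_div_iff₀' hd, ← norm_mul]
    simpa only [Complex.ofReal_sub] using
      norm_one_sub_mul_sum_mul_pow_le hΔ (fun n => sub_nonneg.2 (ha n.le_succ)) hw N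
  have hid : ∑ n ∈ range N, (a n : ℂ) * w ^ n - a 0 / (1 - w)
      = -((a N : ℂ) * w ^ N + w * Q) / (1 - w) := by
    rw [eq_div_iff hw1', sub_mul, div_mul_cancel₀ _ hw1', mul_comm, one_sub_mul_sum_mul_pow]
    ring
  rw [hid, norm_div, norm_neg, sq, ← div_div, ← add_div]
  gcongr
  calc ‖(a N : ℂ) * w ^ N + w * Q‖ ≤ ‖(a N : ℂ) * w ^ N‖ + ‖w * Q‖ := norm_add_le _ _
    _ ≤ a N + 2 * (a 0 - a 1) / ‖1 - w‖ := by
      rw [norm_mul, norm_mul, norm_pow, Complex.norm_real, Real.norm_of_nonneg (ha0 N)]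
      gcongr
      · exact mul_le_of_le_one_right (ha0 N) (pow_le_one₀ (norm_nonneg w) hw)
      · exact (mul_le_of_le_one_left (norm_nonneg _) hw).trans hQ

lemma two_mul_rpow_neg_le_add_s4 {σ u : ℝ} (hσ : 0 ≤ σ) (hu : 0 < u) :
    2 * (u + 1) ^ (-σ) ≤ u ^ (-σ) + (u + 2) ^ (-σ) := by
  have hsq : ∀ {v : ℝ}, 0 < v → v ^ (-σ) = v ^ (-(σ / 2)) * v ^ (-(σ / 2)) := fun hv => by
    rw [← rpow_add hv]; ring_nf
  have hgm : (u + 1) ^ (-σ) ≤ u ^ (-(σ / 2)) * (u + 2) ^ (-(σ / 2)) := by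
    rw [← mul_rpow hu.le (by linarith), hsq (by positivity),
      ← mul_rpow (by positivity) (by positivity)]
    exact rpow_le_rpow_of_nonpos (by positivity) (by nlinarith) (by linarith)
  rw [hsq hu, hsq (by linarith : (0 : ℝ) < u + 2)]
  nlinarith [sq_nonneg (u ^ (-(σ / 2)) - (u + 2) ^ (-(σ / 2)))]

lemma antitone_rpow_neg_sub_succ {σ : ℝ} (hσ : 0 ≤ σ) :
    Antitone fun n : ℕ => ((n : ℝ) + 1) ^ (-σ) - (((n + 1 : ℕ) : ℝ) + 1) ^ (-σ) := by
  refine antitone_nat_of_succ_le fun n => ?_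
  have := two_mul_rpow_neg_le_add_s4 hσ (by positivity : (0 : ℝ) < n + 1)
  push_cast
  rw [show (n : ℝ) + 1 + 1 + 1 = n + 1 + 2 by ring]
  linarith

lemma re_div_one_add_of_norm_eq_one {z : ℂ} (hz : ‖z‖ = 1) (hz1 : 1 + z ≠ 0) :
    (z / (1 + z)).re = 1 / 2 := by
  have hconj : (starRingEnd ℂ) z = z⁻¹ := by
    rw [Complex.inv_def, Complex.normSq_eq_norm_sq, hz]; simp
  have hz0 : z ≠ 0 := by rintro rfl; simp at hz
  have h := Complex.re_eq_add_conj (z / (1 + z))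
  rw [map_div₀, map_add, map_one, hconj] at h
  have : z / (1 + z) + z⁻¹ / (1 + z⁻¹) = 1 := by
    have hz1' : z + 1 ≠ 0 := by rwa [add_comm]
    field_simp
    ring
  apply Complex.ofReal_injective
  rw [h, this]
  norm_num

lemma abs_sub_half_le {x σ l : ℝ} (hσ : 0 < σ)
    (hc : 1 + Complex.exp (↑(π * x) * Complex.I) ≠ 0)
    (hl : Tendsto (fun N : ℕ => ∑ n ∈ range N,
      (-1 : ℝ) ^ n * cos ((n + 1) * π * x) / ((n : ℝ) + 1) ^ σ) atTop (𝓝 l)) :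
    |l - 1 / 2| ≤ 2 * (1 - 2 ^ (-σ)) / ‖1 + Complex.exp (↑(π * x) * Complex.I)‖ ^ 2 := by
  set c := Complex.exp (↑(π * x) * Complex.I)
  set a : ℕ → ℝ := fun n => ((n : ℝ) + 1) ^ (-σ)
  have hc1 : ‖c‖ = 1 := Complex.norm_exp_ofReal_mul_I _
  have ha : Antitone a := fun m n hmn =>
    rpow_le_rpow_of_nonpos (by positivity) (by gcongr) (by linarith)
  have ha0 : ∀ n, 0 ≤ a n := fun n => by positivity
  have hw : ‖-c‖ ≤ 1 := by rw [norm_neg, hc1]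
  have hw1 : -c ≠ 1 := fun h => hc (by rw [← neg_neg c, h]; ring)
  have hterm : ∀ n : ℕ, (-1 : ℝ) ^ n * cos ((n + 1) * π * x) / ((n : ℝ) + 1) ^ σ
      = (c * ((a n : ℂ) * (-c) ^ n)).re := fun n => by
    rw [show c * ((a n : ℂ) * (-c) ^ n) = ((a n * (-1) ^ n : ℝ) : ℂ) * c ^ (n + 1) by
        push_cast; ring,
      ← Complex.exp_nat_mul, Complex.re_ofReal_mul,
      show (↑(n + 1) : ℂ) * (↑(π * x) * Complex.I) = ↑((n + 1) * π * x) * Complex.I by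
        push_cast; ring,
      Complex.exp_ofReal_mul_I_re]
    simp only [a, rpow_neg (by positivity : (0 : ℝ) ≤ n + 1)]
    ring
  have hbound : ∀ N, |∑ n ∈ range N, (-1 : ℝ) ^ n * cos ((n + 1) * π * x) / ((n : ℝ) + 1) ^ σ
      - 1 / 2| ≤ a N / ‖1 + c‖ + 2 * (1 - 2 ^ (-σ)) / ‖1 + c‖ ^ 2 := fun N => by
    have hre : (c * (a 0 / (1 - -c))).re = 1 / 2 := by
      rw [show a 0 = 1 by simp [a], Complex.ofReal_one, sub_neg_eq_add, mul_one_div]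
      exact re_div_one_add_of_norm_eq_one hc1 hc
    simp_rw [hterm, ← Complex.re_sum, ← mul_sum, ← hre, ← Complex.sub_re, ← mul_sub]
    calc _ ≤ ‖c * (∑ n ∈ range N, (a n : ℂ) * (-c) ^ n - a 0 / (1 - -c))‖ :=
          Complex.abs_re_le_norm _
      _ ≤ _ := by
        rw [norm_mul, hc1, one_mul, ← sub_neg_eq_add 1 c]
        convert norm_sum_mul_pow_sub_le ha ha0 (antitone_rpow_neg_sub_succ hσ.le) hw hw1 N using 3
        · norm_num [a]
  have haN : Tendsto a atTop (𝓝 0) :=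
    (tendsto_rpow_neg_atTop hσ).comp (tendsto_natCast_atTop_atTop.atTop_add tendsto_const_nhds)
  simpa using le_of_tendsto_of_tendsto' (hl.sub_const _).abs
    ((haN.div_const _).add_const _) hbound

/-- For `0 < x < 1`, the limit as `s → 1⁻` of `∑_{n=1}^∞ (-1)^{n+1} cos(nπx)/n^{1-s}`
equals `1/2`. -/
theorem stmt4 (x : ℝ) (hx0 : 0 < x) (hx1 : x < 1) (F : ℝ → ℝ)
    (hF : ∀ s : ℝ, s < 1 →
      Tendsto (fun N : ℕ => ∑ n ∈ Finset.range N,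
        (-1 : ℝ) ^ n * Real.cos ((n + 1) * π * x) / ((n : ℝ) + 1) ^ (1 - s)) atTop (𝓝 (F s))) :
    Tendsto F (𝓝[<] 1) (𝓝 (1 / 2)) := by
  set c := Complex.exp (↑(π * x) * Complex.I)
  have hc : 1 + c ≠ 0 := fun h => by
    have hcos : cos π < cos (π * x) :=
      cos_lt_cos_of_nonneg_of_le_pi (by positivity) le_rfl (mul_lt_of_lt_one_right pi_pos hx1)
    have := congrArg Complex.re h
    rw [Complex.add_re, Complex.exp_ofReal_mul_I_re] at this
    norm_num at this hcos
    linarith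
  have hbound : Tendsto (fun s : ℝ => 2 * (1 - (2 : ℝ) ^ (-(1 - s))) / ‖1 + c‖ ^ 2)
      (𝓝[<] 1) (𝓝 0) := by
    have : Continuous fun s : ℝ => 2 * (1 - (2 : ℝ) ^ (-(1 - s))) / ‖1 + c‖ ^ 2 := by
      fun_prop (disch := norm_num)
    simpa using (this.tendsto 1).mono_left nhdsWithin_le_nhds
  refine tendsto_sub_nhds_zero_iff.1 (squeeze_zero_norm' ?_ hbound)
  filter_upwards [self_mem_nhdsWithin] with s hs
  exact abs_sub_half_le (sub_pos.2 hs) hc (hF s hs)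
end

section
/- The limit as s → 0⁺ of ∑_{n=1}^∞ (−1)^n (log n)·(2πn)^s equals (1/2)·log(π/2). -/
/-!
For `s < 0` the series equals `(2π)^s η'(-s)`, where `η(w) = (1 - 2^{1-w}) ζ(w)` is the Dirichlet
eta function, so the limit is `η'(0) = 2 log 2 · ζ(0) - ζ'(0) = -log 2 + log(2π) / 2`.
The difficulty is that for `0 < Re w ≤ 1` the series only converges conditionally. Grouping its
terms in pairs, `(2k+1)^{-w} - (2k+2)^{-w} = O(|w| k^{-Re w - 1})` by the mean value theorem,
gives a series converging locally uniformly on `Re w > 0`; it agrees with `η` for `Re w > 1`,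
hence, by the identity theorem, on a convex region avoiding the pole of `ζ`, and it may be
differentiated termwise.
-/

open Filter Real Topology

noncomputable def dirichletEta (s : ℂ) : ℂ := (1 - 2 ^ (1 - s)) * riemannZeta s

lemma hasDerivAt_one_sub_two_cpow_one_sub (s : ℂ) :
    HasDerivAt (fun s : ℂ => 1 - (2 : ℂ) ^ (1 - s)) (2 ^ (1 - s) * Complex.log 2) s := by
  simpa using ((hasDerivAt_id s).const_sub 1 |>.const_cpow (Or.inl two_ne_zero)).const_sub 1

lemma differentiableAt_dirichletEta {s : ℂ} (hs : s ≠ 1) :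
    DifferentiableAt ℂ dirichletEta s :=
  (hasDerivAt_one_sub_two_cpow_one_sub s).differentiableAt.mul (differentiableAt_riemannZeta hs)

lemma continuousAt_deriv_dirichletEta {s : ℂ} (hs : s ≠ 1) :
    ContinuousAt (deriv dirichletEta) s :=
  ((DifferentiableOn.deriv (fun _ hw => (differentiableAt_dirichletEta hw).differentiableWithinAt)
    isOpen_compl_singleton).differentiableAt (isOpen_compl_singleton.mem_nhds hs)).continuousAt

lemma deriv_dirichletEta_zero : deriv dirichletEta 0 = (Real.log (π / 2) / 2 : ℝ) := by
  have hζ : HasDerivAt riemannZeta (-Complex.log (2 * π) / 2) 0 :=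
    deriv_riemannZeta_zero ▸ (differentiableAt_riemannZeta zero_ne_one).hasDerivAt
  have hη : HasDerivAt dirichletEta _ 0 := (hasDerivAt_one_sub_two_cpow_one_sub 0).mul hζ
  have hlog2 : Complex.log 2 = (Real.log 2 : ℂ) := by simp
  have hlog2π : Complex.log (2 * π) = (Real.log 2 + Real.log π : ℝ) := by
    rw [← Real.log_mul two_ne_zero pi_ne_zero, Complex.ofReal_log (by positivity)]
    push_cast
    rfl
  rw [hη.deriv, sub_zero, Complex.cpow_one, riemannZeta_zero, hlog2, hlog2π,
    Real.log_div pi_ne_zero two_ne_zero]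
  push_cast
  ring

lemma norm_ofReal_cpow_neg_sub_le {w : ℂ} (hw : 0 ≤ w.re) {x y : ℝ} (hx : 0 < x) (hxy : x ≤ y) :
    ‖(x : ℂ) ^ (-w) - (y : ℂ) ^ (-w)‖ ≤ ‖w‖ * x ^ (-w.re - 1) * (y - x) := by
  have hderiv : ∀ t ∈ Set.Icc x y, HasDerivWithinAt (fun t : ℝ => (t : ℂ) ^ (-w))
      (-w * (t : ℂ) ^ (-w - 1)) (Set.Icc x y) t := fun t ht =>
    (Complex.hasStrictDerivAt_cpow_const (Complex.ofReal_mem_slitPlane.2 (hx.trans_le ht.1))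
      ).hasDerivAt.comp_ofReal.hasDerivWithinAt
  have hbound : ∀ t ∈ Set.Icc x y, ‖-w * (t : ℂ) ^ (-w - 1)‖ ≤ ‖w‖ * x ^ (-w.re - 1) := by
    intro t ht
    rw [norm_mul, norm_neg, Complex.norm_cpow_eq_rpow_re_of_pos (hx.trans_le ht.1)]
    gcongr
    simp only [Complex.sub_re, Complex.neg_re, Complex.one_re]
    exact Real.rpow_le_rpow_of_nonpos hx ht.1 (by linarith)
  have := (convex_Icc x y).norm_image_sub_le_of_norm_hasDerivWithin_le hderiv hbound
    (Set.left_mem_Icc.2 hxy) (Set.right_mem_Icc.2 hxy)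
  rwa [norm_sub_rev, ← Real.norm_of_nonneg (sub_nonneg.2 hxy)]

lemma summable_nat_add_one_rpow {p : ℝ} (hp : p < -1) :
    Summable (fun n : ℕ => ((n : ℝ) + 1) ^ p) := by
  simpa using (summable_nat_add_iff 1).2 (Real.summable_nat_rpow.2 hp)

noncomputable def etaPair (k : ℕ) (w : ℂ) : ℂ :=
  ((2 * k + 1 : ℕ) : ℂ) ^ (-w) - ((2 * k + 2 : ℕ) : ℂ) ^ (-w)

lemma hasDerivAt_etaPair (k : ℕ) (w : ℂ) : HasDerivAt (etaPair k)
    (Complex.log (2 * k + 2 : ℕ) * ((2 * k + 2 : ℕ) : ℂ) ^ (-w)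
      - Complex.log (2 * k + 1 : ℕ) * ((2 * k + 1 : ℕ) : ℂ) ^ (-w)) w := by
  have h (n : ℕ) (hn : n ≠ 0) : HasDerivAt (fun w : ℂ => (n : ℂ) ^ (-w))
      (-(Complex.log n * (n : ℂ) ^ (-w))) w := by
    convert (hasDerivAt_neg w).const_cpow (Or.inl (Nat.cast_ne_zero.2 hn)) using 1
    ring
  exact ((h (2 * k + 1) (by omega)).fun_sub (h (2 * k + 2) (by omega))).congr_deriv (by ring)

lemma differentiable_etaPair (k : ℕ) : Differentiable ℂ (etaPair k) :=
  fun w => (hasDerivAt_etaPair k w).differentiableAt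

lemma norm_etaPair_le (k : ℕ) {w : ℂ} (hw : 0 ≤ w.re) :
    ‖etaPair k w‖ ≤ ‖w‖ * ((k : ℝ) + 1) ^ (-w.re - 1) := by
  have h := norm_ofReal_cpow_neg_sub_le hw (x := 2 * k + 1) (y := 2 * k + 2) (by positivity)
    (by linarith)
  push_cast at h
  rw [etaPair]
  push_cast
  refine h.trans ?_
  rw [show (2 * (k : ℝ) + 2 - (2 * k + 1)) = 1 by ring, mul_one]
  exact mul_le_mul_of_nonneg_left
    (Real.rpow_le_rpow_of_nonpos (by positivity) (by linarith) (by linarith)) (norm_nonneg w)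

lemma exists_summable_bound_etaPair {w₀ : ℂ} (hw₀ : 0 < w₀.re) :
    ∃ O ∈ 𝓝 w₀, IsOpen O ∧ ∃ u : ℕ → ℝ, Summable u ∧ ∀ k, ∀ w ∈ O, ‖etaPair k w‖ ≤ u k := by
  set δ := w₀.re / 2
  set R := ‖w₀‖ + 1
  have hδ : 0 < δ := by positivity
  have hO : IsOpen {w : ℂ | δ < w.re ∧ ‖w‖ < R} :=
    (isOpen_lt continuous_const Complex.continuous_re).inter
      (isOpen_lt continuous_norm continuous_const)
  refine ⟨_, hO.mem_nhds ⟨half_lt_self hw₀, lt_add_one _⟩, hO,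
    fun k => R * ((k : ℝ) + 1) ^ (-δ - 1),
    (summable_nat_add_one_rpow (by linarith)).mul_left R, fun k w hw => ?_⟩
  calc ‖etaPair k w‖ ≤ ‖w‖ * ((k : ℝ) + 1) ^ (-w.re - 1) := norm_etaPair_le k (by linarith [hw.1])
    _ ≤ R * ((k : ℝ) + 1) ^ (-δ - 1) := by
      gcongr
      · exact hw.2.le
      · linarith
      · linarith [hw.1]

lemma differentiableAt_tsum_etaPair {w : ℂ} (hw : 0 < w.re) :
    DifferentiableAt ℂ (fun w => ∑' k, etaPair k w) w := by
  obtain ⟨O, hwO, hO, u, hu, hbound⟩ := exists_summable_bound_etaPair hw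
  exact (Complex.differentiableOn_tsum_of_summable_norm hu
    (fun k => (differentiable_etaPair k).differentiableOn) hO
    hbound).differentiableAt hwO

lemma hasSum_deriv_etaPair {w : ℂ} (hw : 0 < w.re) :
    HasSum (fun k => deriv (etaPair k) w) (deriv (fun w => ∑' k, etaPair k w) w) := by
  obtain ⟨O, hwO, hO, u, hu, hbound⟩ := exists_summable_bound_etaPair hw
  exact Complex.hasSum_deriv_of_summable_norm hu
    (fun k => (differentiable_etaPair k).differentiableOn) hO
    hbound (mem_of_mem_nhds hwO)

lemma tsum_etaPair_of_one_lt_re {w : ℂ} (hw : 1 < w.re) :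
    ∑' k, etaPair k w = dirichletEta w := by
  set ψ : ℕ → ℂ := fun n => ((n + 1 : ℕ) : ℂ) ^ (-w)
  have hψ : Summable ψ := by
    refine Summable.of_norm ((summable_nat_add_one_rpow (p := -w.re) (by linarith)).congr
      fun n => ?_)
    rw [Complex.norm_natCast_cpow_of_pos n.succ_pos]
    push_cast
    rfl
  have hζ : ∑' n, ψ n = riemannZeta w := by
    rw [zeta_eq_tsum_one_div_nat_add_one_cpow hw]
    congr 1 with n
    simp only [ψ]
    rw [Complex.cpow_neg, one_div]
    push_cast
    rfl
  have hψ_odd : ∀ k, ψ (2 * k + 1) = 2 ^ (-w) * ψ k := fun k => by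
    simp only [ψ, show 2 * k + 1 + 1 = 2 * (k + 1) by ring, Nat.cast_mul,
      Complex.natCast_mul_natCast_cpow]
    rfl
  have hsum_even : Summable fun k => ψ (2 * k) := hψ.comp_injective fun a b h => by omega
  have hsum_odd : Summable fun k => ψ (2 * k + 1) := hψ.comp_injective fun a b h => by omega
  have hsplit := tsum_even_add_odd hsum_even hsum_odd
  rw [tsum_congr hψ_odd, tsum_mul_left, hζ] at hsplit
  have h2 : (2 : ℂ) ^ (1 - w) = 2 * 2 ^ (-w) := by
    rw [sub_eq_add_neg, Complex.cpow_add _ _ two_ne_zero, Complex.cpow_one]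
  rw [show (fun k => etaPair k w) = fun k => ψ (2 * k) - ψ (2 * k + 1) from rfl,
    hsum_even.tsum_sub hsum_odd, tsum_congr hψ_odd, tsum_mul_left, hζ, dirichletEta, h2]
  linear_combination hsplit

lemma hasSum_deriv_etaPair_of_mem_Ioo {s : ℝ} (hs : s ∈ Set.Ioo 0 1) :
    HasSum (fun k => deriv (etaPair k) s) (deriv dirichletEta s) := by
  -- a convex open set on which the series and `η` are both holomorphic: it avoids the pole at `1`
  -- but reaches the half-plane of absolute convergence
  set H := {w : ℂ | 0 < w.re ∧ w.re - w.im < 1}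
  have hH : IsOpen H := (isOpen_lt continuous_const Complex.continuous_re).inter
    (isOpen_lt (Complex.continuous_re.sub Complex.continuous_im) continuous_const)
  have hconv : Convex ℝ H := (convex_halfSpace_re_gt 0).inter
    (convex_halfSpace_lt (Complex.reLm - Complex.imLm).isLinear 1)
  have hg : AnalyticOnNhd ℂ (fun w => ∑' k, etaPair k w) H := DifferentiableOn.analyticOnNhd
    (fun w hw => (differentiableAt_tsum_etaPair hw.1).differentiableWithinAt) hH
  have hη : AnalyticOnNhd ℂ dirichletEta H := DifferentiableOn.analyticOnNhd
    (fun w hw => (differentiableAt_dirichletEta fun h => by simp [H, h] at hw)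
      |>.differentiableWithinAt) hH
  have hmem : 2 + 2 * Complex.I ∈ H := by simp [H]
  have heq : Set.EqOn (fun w => ∑' k, etaPair k w) dirichletEta H := by
    refine hg.eqOn_of_preconnected_of_eventuallyEq hη hconv.isPreconnected hmem ?_
    filter_upwards [(isOpen_lt continuous_const Complex.continuous_re).mem_nhds
      (show (1 : ℝ) < (2 + 2 * Complex.I).re by simp)] with w hw
    exact tsum_etaPair_of_one_lt_re hw
  rw [← (Filter.eventuallyEq_of_mem (hH.mem_nhds (by simpa [H] using hs)) heq).deriv_eq]
  exact hasSum_deriv_etaPair (by simpa using hs.1)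

lemma sum_range_two_mul {M : Type*} [AddCommMonoid M] (f : ℕ → M) (N : ℕ) :
    ∑ n ∈ Finset.range (2 * N), f n = ∑ k ∈ Finset.range N, (f (2 * k) + f (2 * k + 1)) := by
  induction N with
  | zero => simp
  | succ N ih => rw [Nat.mul_succ, Finset.sum_range_succ, Finset.sum_range_succ,
      Finset.sum_range_succ, ih, add_assoc]

lemma deriv_etaPair_ofReal_neg (k : ℕ) (s : ℝ) :
    deriv (etaPair k) ((-s : ℝ) : ℂ) = ((Real.log (2 * k + 2) * (2 * k + 2 : ℝ) ^ s
      - Real.log (2 * k + 1) * (2 * k + 1 : ℝ) ^ s : ℝ) : ℂ) := by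
  have h (x : ℝ) (hx : 0 ≤ x) :
      Complex.log x * (x : ℂ) ^ (s : ℂ) = ((Real.log x * x ^ s : ℝ) : ℂ) := by
    rw [Complex.ofReal_mul, Complex.ofReal_log hx, Complex.ofReal_cpow hx]
  rw [(hasDerivAt_etaPair k _).deriv, Complex.ofReal_neg, neg_neg, ← Complex.ofReal_natCast,
    ← Complex.ofReal_natCast (2 * k + 1), h _ (Nat.cast_nonneg _), h _ (Nat.cast_nonneg _),
    ← Complex.ofReal_sub]
  push_cast
  ring

lemma tendsto_sum_range_two_mul_neg_one_pow_mul_log_mul_rpow {s : ℝ} (hs : s ∈ Set.Ioo (-1) 0) :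
    Tendsto (fun N : ℕ => ∑ n ∈ Finset.range (2 * N),
      (-1 : ℝ) ^ (n + 1) * Real.log (n + 1) * ((n : ℝ) + 1) ^ s) atTop
      (𝓝 (deriv dirichletEta ((-s : ℝ) : ℂ)).re) := by
  have h := (hasSum_deriv_etaPair_of_mem_Ioo (s := -s) ⟨by linarith [hs.2], by linarith [hs.1]⟩)
  refine ((Complex.continuous_re.tendsto _).comp h.tendsto_sum_nat).congr fun N => ?_
  rw [Function.comp_apply, Complex.re_sum, sum_range_two_mul]
  refine Finset.sum_congr rfl fun k _ => ?_
  rw [deriv_etaPair_ofReal_neg, Complex.ofReal_re, Odd.neg_one_pow ⟨k, rfl⟩,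
    Even.neg_one_pow ⟨k + 1, by ring⟩]
  push_cast
  rw [show 2 * (k : ℝ) + 1 + 1 = 2 * k + 2 by ring]
  ring

/-- The limit as `s → 0` (along real `s < 0`, where the series
`∑_{n=1}^∞ (-1)^n (log n)·(2πn)^s` converges) equals `(1/2)·log(π/2)`. -/
theorem stmt6 (F : ℝ → ℝ)
    (hF : ∀ s : ℝ, s < 0 →
      Tendsto (fun N : ℕ => ∑ n ∈ Finset.range N,
        (-1 : ℝ) ^ (n + 1) * Real.log (n + 1) * (2 * π * (n + 1)) ^ s) atTop (𝓝 (F s))) :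
    Tendsto F (𝓝[<] 0) (𝓝 ((1 / 2) * Real.log (π / 2))) := by
  set G : ℝ → ℝ := fun s => (2 * π) ^ s * (deriv dirichletEta ((-s : ℝ) : ℂ)).re
  have hFG : ∀ᶠ s in 𝓝[<] 0, G s = F s := by
    filter_upwards [Ioo_mem_nhdsLT (show (-1 : ℝ) < 0 by norm_num)] with s hs
    have hG := (tendsto_sum_range_two_mul_neg_one_pow_mul_log_mul_rpow hs).const_mul ((2 * π) ^ s)
    refine tendsto_nhds_unique (hG.congr fun N => ?_)
      ((hF s hs.2).comp (tendsto_id.const_mul_atTop' two_pos))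
    rw [Function.comp_apply, Finset.mul_sum]
    refine Finset.sum_congr rfl fun n _ => ?_
    rw [Real.mul_rpow (x := 2 * π) (by positivity) (by positivity)]
    ring
  have hG : ContinuousAt G 0 :=
    (Real.continuousAt_const_rpow (by positivity)).mul (Complex.continuous_re.continuousAt.comp
      ((continuousAt_deriv_dirichletEta (by simp)).comp
        (Complex.continuous_ofReal.comp continuous_neg).continuousAt))
  have hG0 : G 0 = 1 / 2 * Real.log (π / 2) := by
    simp only [G, neg_zero, Complex.ofReal_zero, rpow_zero, one_mul, deriv_dirichletEta_zero,
      Complex.ofReal_re]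
    ring
  exact (hG0 ▸ hG.tendsto.mono_left nhdsWithin_le_nhds).congr' hFG
end
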